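/- Let n ∈ ℕ and let z₁, z₂ ∈ ℂ satisfy |z₁|² + |z₂|² = 1, and define the (normalized) vector ψ ∈ ℂ^{n+1} by ψ_k = √C(n,k) · z₁^{n−k} · z₂^{k} for k ∈ {0,…,n}. Then the expectation values of the spin operators in the state ψ are ⟨ψ, J_x ψ⟩ = n·Re(conj(z₁)·z₂), ⟨ψ, J_y ψ⟩ = n·Im(conj(z₁)·z₂), and ⟨ψ, J_z ψ⟩ = (n/2)·(|z₁|² − |z₂|²). -/

import Mathlib

/-!
Writing `J₊ := J_x + i J_y` (a weighted shift with weights `√((k+1)(n-k))`), one has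
`J_x = (J₊ + J₊ᴴ)/2` and `J_y = -(i/2)(J₊ - J₊ᴴ)`, so `⟨ψ, J_x ψ⟩` and `⟨ψ, J_y ψ⟩` are the real
and imaginary parts of `⟨ψ, J₊ ψ⟩`. The weights turn each term of `⟨ψ, J₊ ψ⟩` into a binomial
term: `conj ψ_k · √((k+1)(n-k)) · ψ_{k+1} = n C(n-1,k) |z₁|^{2(n-1-k)} |z₂|^{2k} conj z₁ z₂`,
so `⟨ψ, J₊ ψ⟩ = n conj z₁ z₂ (|z₁|² + |z₂|²)^{n-1}`. Finally `|ψ_k|²` is the binomial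
distribution with parameter `|z₂|²`, so `⟨ψ, J_z ψ⟩ = n/2 - n |z₂|²` by the binomial mean.
-/

open Matrix Finset

/-- The spin matrix `J_x` for spin `j = n/2` (rows/columns indexed by `k = j − m ∈ {0,…,n}`):
`(J_x)_{k,k+1} = (J_x)_{k+1,k} = (1/2)√((k+1)(n−k))`, all other entries zero. -/
noncomputable def Jx (n : ℕ) : Matrix (Fin (n + 1)) (Fin (n + 1)) ℂ :=
  Matrix.of fun k' k =>
    if (k : ℕ) = (k' : ℕ) + 1 then
      ((1 / 2 : ℝ) * Real.sqrt (((k' : ℕ) + 1 : ℝ) * ((n : ℝ) - (k' : ℕ))) : ℂ)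
    else if (k' : ℕ) = (k : ℕ) + 1 then
      ((1 / 2 : ℝ) * Real.sqrt (((k : ℕ) + 1 : ℝ) * ((n : ℝ) - (k : ℕ))) : ℂ)
    else 0

/-- The spin matrix `J_y` for spin `j = n/2`:
`(J_y)_{k,k+1} = −(i/2)√((k+1)(n−k))`, `(J_y)_{k+1,k} = (i/2)√((k+1)(n−k))`,
all other entries zero. -/
noncomputable def Jy (n : ℕ) : Matrix (Fin (n + 1)) (Fin (n + 1)) ℂ :=
  Matrix.of fun k' k =>
    if (k : ℕ) = (k' : ℕ) + 1 then
      -(Complex.I / 2) * (Real.sqrt (((k' : ℕ) + 1 : ℝ) * ((n : ℝ) - (k' : ℕ))) : ℂ)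
    else if (k' : ℕ) = (k : ℕ) + 1 then
      (Complex.I / 2) * (Real.sqrt (((k : ℕ) + 1 : ℝ) * ((n : ℝ) - (k : ℕ))) : ℂ)
    else 0

/-- The spin matrix `J_z` for spin `j = n/2`: diagonal with entries `n/2 − k`. -/
noncomputable def Jz (n : ℕ) : Matrix (Fin (n + 1)) (Fin (n + 1)) ℂ :=
  Matrix.diagonal fun k => ((n : ℂ) / 2 - (k : ℕ))

lemma star_dotProduct_conjTranspose_mulVec {ι R : Type*} [Fintype ι] [CommSemiring R] [StarRing R]
    (A : Matrix ι ι R) (v : ι → R) :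
    star v ⬝ᵥ (Aᴴ *ᵥ v) = star (star v ⬝ᵥ (A *ᵥ v)) := by
  rw [star_dotProduct, star_mulVec, conjTranspose_conjTranspose, dotProduct_mulVec]

lemma star_dotProduct_smul_add_conjTranspose_mulVec {ι : Type*} [Fintype ι]
    (A : Matrix ι ι ℂ) (v : ι → ℂ) :
    star v ⬝ᵥ (((2⁻¹ : ℂ) • (A + Aᴴ)) *ᵥ v) = ((star v ⬝ᵥ (A *ᵥ v)).re : ℂ) := by
  rw [smul_mulVec, add_mulVec, dotProduct_smul, dotProduct_add,
    star_dotProduct_conjTranspose_mulVec, Complex.star_def, Complex.re_eq_add_conj, smul_eq_mul,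
    div_eq_inv_mul]

lemma star_dotProduct_smul_sub_conjTranspose_mulVec {ι : Type*} [Fintype ι]
    (A : Matrix ι ι ℂ) (v : ι → ℂ) :
    star v ⬝ᵥ (((-Complex.I / 2) • (A - Aᴴ)) *ᵥ v) = ((star v ⬝ᵥ (A *ᵥ v)).im : ℂ) := by
  rw [smul_mulVec, sub_mulVec, dotProduct_smul, dotProduct_sub,
    star_dotProduct_conjTranspose_mulVec, Complex.star_def, Complex.im_eq_sub_conj, smul_eq_mul]
  field_simp
  rw [Complex.I_sq]; ring

lemma dotProduct_of_shift_mulVec {R : Type*} [NonUnitalNonAssocSemiring R] (n : ℕ)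
    (c u v : ℕ → R) :
    (fun k : Fin (n + 1) => u k) ⬝ᵥ
        (of (fun k j : Fin (n + 1) => if (j : ℕ) = k + 1 then c k else 0) *ᵥ fun k => v k) =
      ∑ k ∈ range n, u k * (c k * v (k + 1)) := by
  have hrow (k : ℕ) : ∑ j : Fin (n + 1), (if (j : ℕ) = k + 1 then c k else 0) * v j =
      if k + 1 ∈ range (n + 1) then c k * v (k + 1) else 0 := by
    simp only [ite_mul, zero_mul]
    rw [Fin.sum_univ_eq_sum_range (fun j => if j = k + 1 then c k * v j else 0), sum_ite_eq']
  simp only [dotProduct, mulVec, of_apply, hrow]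
  rw [Fin.sum_univ_eq_sum_range
    (fun k => u k * if k + 1 ∈ range (n + 1) then c k * v (k + 1) else 0), sum_range_succ]
  simp only [mem_range, add_lt_add_iff_right, lt_irrefl, if_false, mul_zero, add_zero]
  exact sum_congr rfl fun k hk => by rw [if_pos (mem_range.mp hk)]

lemma sum_range_cast_mul_choose_mul_pow_mul_pow {R : Type*} [CommRing R] {x y : R}
    (h : x + y = 1) (n : ℕ) :
    ∑ k ∈ range (n + 1), (k : R) * (n.choose k * x ^ (n - k) * y ^ k) = n * y := by
  obtain rfl : x = 1 - y := eq_sub_of_add_eq h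
  have hmean := congrArg (Polynomial.eval y) (bernsteinPolynomial.sum_smul R n)
  simp only [Polynomial.eval_finsetSum, bernsteinPolynomial, Polynomial.eval_mul,
    Polynomial.eval_pow, Polynomial.eval_sub, Polynomial.eval_one, Polynomial.eval_X,
    Polynomial.eval_natCast, nsmul_eq_mul] at hmean
  rw [← hmean]
  exact sum_congr rfl fun k _ => by ring

lemma sum_range_choose_mul_pow_mul_pow {R : Type*} [CommSemiring R] {x y : R}
    (h : x + y = 1) (n : ℕ) :
    ∑ k ∈ range (n + 1), (n.choose k : R) * x ^ (n - k) * y ^ k = 1 := by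
  have hbinom := add_pow y x n
  rw [add_comm, h, one_pow] at hbinom
  rw [hbinom]
  exact sum_congr rfl fun k _ => by ring

lemma sqrt_choose_mul_sqrt_mul_sqrt_choose_succ {m k : ℕ} (hk : k ≤ m) :
    √((m + 1).choose k : ℝ) * √(((k : ℝ) + 1) * ((m + 1 : ℕ) - k)) *
        √((m + 1).choose (k + 1) : ℝ) = (m + 1) * m.choose k := by
  rw [← Nat.cast_add_one, ← Nat.cast_sub (by omega), ← Nat.cast_add_one, ← Nat.cast_mul,
    ← Real.sqrt_mul (by positivity), ← Real.sqrt_mul (by positivity)]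
  have hsq : (m + 1).choose k * ((k + 1) * (m + 1 - k)) * (m + 1).choose (k + 1) =
      ((m + 1) * m.choose k) ^ 2 := by
    calc (m + 1).choose k * ((k + 1) * (m + 1 - k)) * (m + 1).choose (k + 1)
        = ((m + 1).choose k * (m + 1 - k)) * ((m + 1).choose (k + 1) * (k + 1)) := by ring
      _ = ((m + 1) * m.choose k) ^ 2 := by
        rw [← Nat.choose_mul_succ_eq, ← Nat.add_one_mul_choose_eq]; ring
  rw [← Nat.cast_mul, ← Nat.cast_mul, hsq, Nat.cast_pow, Real.sqrt_sq (by positivity)]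
  push_cast; ring

noncomputable def spinRaising (n : ℕ) : Matrix (Fin (n + 1)) (Fin (n + 1)) ℂ :=
  of fun k j => if (j : ℕ) = k + 1 then (√(((k : ℕ) + 1 : ℝ) * (n - (k : ℕ))) : ℂ) else 0

lemma Jx_eq_smul_add_conjTranspose (n : ℕ) :
    Jx n = (2⁻¹ : ℂ) • (spinRaising n + (spinRaising n)ᴴ) := by
  ext k j
  simp only [Jx, spinRaising, of_apply, Matrix.smul_apply, Matrix.add_apply, conjTranspose_apply,
    smul_eq_mul, Complex.star_def]
  split_ifs <;> simp only [map_zero, Complex.conj_ofReal] <;> first | omega | push_cast; ring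

lemma Jy_eq_smul_sub_conjTranspose (n : ℕ) :
    Jy n = (-Complex.I / 2) • (spinRaising n - (spinRaising n)ᴴ) := by
  ext k j
  simp only [Jy, spinRaising, of_apply, Matrix.smul_apply, Matrix.sub_apply, conjTranspose_apply,
    smul_eq_mul, Complex.star_def]
  split_ifs <;> simp only [map_zero, Complex.conj_ofReal] <;> first | omega | ring

lemma dotProduct_spinRaising_mulVec (n : ℕ) (u v : ℕ → ℂ) :
    (fun k : Fin (n + 1) => u k) ⬝ᵥ (spinRaising n *ᵥ fun k => v k) =
      ∑ k ∈ range n, u k * (√(((k : ℝ) + 1) * (n - k)) * v (k + 1)) :=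
  dotProduct_of_shift_mulVec n (fun k => (√(((k : ℝ) + 1) * (n - k)) : ℂ)) u v

lemma star_dotProduct_Jz_mulVec (n : ℕ) (v : Fin (n + 1) → ℂ) :
    star v ⬝ᵥ (Jz n *ᵥ v) = ∑ k : Fin (n + 1), ((n : ℂ) / 2 - (k : ℕ)) * (star (v k) * v k) := by
  simp only [Jz, mulVec_diagonal, dotProduct, Pi.star_apply]
  exact sum_congr rfl fun k _ => by ring

noncomputable def coherentAmplitude (n : ℕ) (z₁ z₂ : ℂ) (k : ℕ) : ℂ :=
  √(n.choose k : ℝ) * z₁ ^ (n - k) * z₂ ^ k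

lemma star_coherentAmplitude_mul_self (n : ℕ) (z₁ z₂ : ℂ) (k : ℕ) :
    star (coherentAmplitude n z₁ z₂ k) * coherentAmplitude n z₁ z₂ k =
      n.choose k * ((‖z₁‖ : ℂ) ^ 2) ^ (n - k) * ((‖z₂‖ : ℂ) ^ 2) ^ k := by
  have hchoose : (√(n.choose k : ℝ) : ℂ) * √(n.choose k : ℝ) = n.choose k := by
    rw [← Complex.ofReal_mul, Real.mul_self_sqrt (Nat.cast_nonneg _), Complex.ofReal_natCast]
  simp only [coherentAmplitude, Complex.star_def, map_mul, map_pow, Complex.conj_ofReal,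
    ← Complex.conj_mul', ← hchoose]
  ring

lemma star_coherentAmplitude_mul_sqrt_mul_coherentAmplitude_succ {m k : ℕ} (z₁ z₂ : ℂ)
    (hk : k ≤ m) :
    star (coherentAmplitude (m + 1) z₁ z₂ k) *
        (√(((k : ℝ) + 1) * ((m + 1 : ℕ) - k)) * coherentAmplitude (m + 1) z₁ z₂ (k + 1)) =
      (m + 1) * (starRingEnd ℂ z₁ * z₂) *
        (((‖z₂‖ : ℂ) ^ 2) ^ k * ((‖z₁‖ : ℂ) ^ 2) ^ (m - k) * m.choose k) := by
  have hsqrt : (√((m + 1).choose k : ℝ) : ℂ) * √(((k : ℝ) + 1) * ((m + 1 : ℕ) - k)) *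
      √((m + 1).choose (k + 1) : ℝ) = (m + 1) * m.choose k := by
    rw [← Complex.ofReal_mul, ← Complex.ofReal_mul, sqrt_choose_mul_sqrt_mul_sqrt_choose_succ hk]
    push_cast; ring
  have hpow₁ : m + 1 - k = m - k + 1 := by omega
  have hpow₂ : m + 1 - (k + 1) = m - k := by omega
  simp only [coherentAmplitude, Complex.star_def, map_mul, map_pow, Complex.conj_ofReal,
    ← Complex.conj_mul', hpow₁, hpow₂]
  linear_combination (starRingEnd ℂ z₁ * z₂) * ((starRingEnd ℂ z₁ * z₁) ^ (m - k) *
    (starRingEnd ℂ z₂ * z₂) ^ k) * hsqrt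

lemma star_coherentAmplitude_dotProduct_spinRaising_mulVec (n : ℕ) (z₁ z₂ : ℂ) :
    star (fun k : Fin (n + 1) => coherentAmplitude n z₁ z₂ k) ⬝ᵥ
        (spinRaising n *ᵥ fun k => coherentAmplitude n z₁ z₂ k) =
      n * (starRingEnd ℂ z₁ * z₂) * ((‖z₁‖ : ℂ) ^ 2 + (‖z₂‖ : ℂ) ^ 2) ^ (n - 1) := by
  refine (dotProduct_spinRaising_mulVec n (fun k => star (coherentAmplitude n z₁ z₂ k)) _).trans ?_
  cases n with
  | zero => simp
  | succ m =>
    rw [sum_congr rfl fun k hk => star_coherentAmplitude_mul_sqrt_mul_coherentAmplitude_succ z₁ z₂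
      (Nat.lt_succ_iff.mp (mem_range.mp hk)), ← mul_sum, Nat.add_sub_cancel,
      add_comm ((‖z₁‖ : ℂ) ^ 2), add_pow, Nat.cast_add_one]

lemma star_coherentAmplitude_dotProduct_Jz_mulVec (n : ℕ) {z₁ z₂ : ℂ}
    (h : (‖z₁‖ : ℂ) ^ 2 + (‖z₂‖ : ℂ) ^ 2 = 1) :
    star (fun k : Fin (n + 1) => coherentAmplitude n z₁ z₂ k) ⬝ᵥ
        (Jz n *ᵥ fun k => coherentAmplitude n z₁ z₂ k) =
      n / 2 * ((‖z₁‖ : ℂ) ^ 2 - (‖z₂‖ : ℂ) ^ 2) := by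
  rw [star_dotProduct_Jz_mulVec, Fin.sum_univ_eq_sum_range (fun k =>
    ((n : ℂ) / 2 - k) * (star (coherentAmplitude n z₁ z₂ k) * coherentAmplitude n z₁ z₂ k))]
  simp only [star_coherentAmplitude_mul_self, sub_mul, sum_sub_distrib, ← mul_sum,
    sum_range_choose_mul_pow_mul_pow h, sum_range_cast_mul_choose_mul_pow_mul_pow h]
  linear_combination (-n / 2 : ℂ) * h

/-- Expectation values of the spin operators in the spin coherent state
`ψ_k = √C(n,k)·z₁^{n−k}·z₂^k` (with `|z₁|² + |z₂|² = 1`):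
`⟨ψ, J_x ψ⟩ = n·Re(conj(z₁)z₂)`, `⟨ψ, J_y ψ⟩ = n·Im(conj(z₁)z₂)`,
`⟨ψ, J_z ψ⟩ = (n/2)(|z₁|² − |z₂|²)`. -/
theorem coherent_state_expectation (n : ℕ) (z₁ z₂ : ℂ)
    (h : ‖z₁‖ ^ 2 + ‖z₂‖ ^ 2 = 1)
    (ψ : Fin (n + 1) → ℂ)
    (hψ : ∀ k : Fin (n + 1),
      ψ k = (Real.sqrt (n.choose (k : ℕ) : ℝ) : ℂ) * z₁ ^ (n - (k : ℕ)) * z₂ ^ (k : ℕ)) :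
    (∑ k : Fin (n + 1), starRingEnd ℂ (ψ k) * (Jx n).mulVec ψ k =
        (((n : ℝ) * (starRingEnd ℂ z₁ * z₂).re : ℝ) : ℂ)) ∧
    (∑ k : Fin (n + 1), starRingEnd ℂ (ψ k) * (Jy n).mulVec ψ k =
        (((n : ℝ) * (starRingEnd ℂ z₁ * z₂).im : ℝ) : ℂ)) ∧
    (∑ k : Fin (n + 1), starRingEnd ℂ (ψ k) * (Jz n).mulVec ψ k =
        (((n : ℝ) / 2 * (‖z₁‖ ^ 2 - ‖z₂‖ ^ 2) : ℝ) : ℂ)) := by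
  obtain rfl : ψ = fun k : Fin (n + 1) => coherentAmplitude n z₁ z₂ k := funext hψ
  have hnorm : (‖z₁‖ : ℂ) ^ 2 + (‖z₂‖ : ℂ) ^ 2 = 1 := by exact_mod_cast h
  have hraising := star_coherentAmplitude_dotProduct_spinRaising_mulVec n z₁ z₂
  rw [hnorm, one_pow, mul_one] at hraising
  refine ⟨?_, ?_, ?_⟩
  · change star _ ⬝ᵥ (Jx n *ᵥ _) = _
    rw [Jx_eq_smul_add_conjTranspose, star_dotProduct_smul_add_conjTranspose_mulVec, hraising,
      ← Complex.ofReal_natCast, Complex.re_ofReal_mul]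
  · change star _ ⬝ᵥ (Jy n *ᵥ _) = _
    rw [Jy_eq_smul_sub_conjTranspose, star_dotProduct_smul_sub_conjTranspose_mulVec, hraising,
      ← Complex.ofReal_natCast, Complex.im_ofReal_mul]
  · change star _ ⬝ᵥ (Jz n *ᵥ _) = _
    rw [star_coherentAmplitude_dotProduct_Jz_mulVec n hnorm]
    push_cast
    ring
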